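/- For every n ≥ 1, every full-rank lattice L ⊆ ℝⁿ, and every γ > 1, there exists a (γ√n, γ)-filtration of L. -/

import Mathlib

open Metric Submodule
noncomputable section

/-- The length of a shortest nonzero vector of a set `A`. -/
def lambda1 {E : Type*} [NormedAddCommGroup E] (A : Set E) : ℝ :=
  sInf (norm '' (A \ {0}))

/-- The covering radius of a lattice (given as a set): the supremum, over points `x` in the
real span of `A`, of the distance from `x` to `A`. -/
def covRad {E : Type*} [NormedAddCommGroup E] [NormedSpace ℝ E] (A : Set E) : ℝ :=
  sSup ((fun x => Metric.infDist x A) '' ((Submodule.span ℝ A : Submodule ℝ E) : Set E))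

/-- The image of the set `A` under the orthogonal projection onto the orthogonal complement
of the real span of `S`. -/
def projPerp {n : ℕ} (S A : Set (EuclideanSpace ℝ (Fin n))) : Set (EuclideanSpace ℝ (Fin n)) :=
  (fun x => ((orthogonalProjection (Submodule.span ℝ S)ᗮ) x : EuclideanSpace ℝ (Fin n))) '' A

/-- The quotient lattice `L_j / L_{j−1}`: the orthogonal projection of `L_j` onto the
orthogonal complement of the span of `L_{j−1}`. -/
def quotLat {n : ℕ} (Ls : ℕ → Submodule ℤ (EuclideanSpace ℝ (Fin n))) (j : ℕ) :
    Set (EuclideanSpace ℝ (Fin n)) :=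
  projPerp (Ls (j - 1) : Set (EuclideanSpace ℝ (Fin n)))
    (Ls j : Set (EuclideanSpace ℝ (Fin n)))

/-- `Ls 0 ⊂ Ls 1 ⊂ ⋯ ⊂ Ls m` is a chain of primitive sublattices of `L` from `{0}` to `L`. -/
def IsPrimitiveChain {n : ℕ} (L : Submodule ℤ (EuclideanSpace ℝ (Fin n))) (m : ℕ)
    (Ls : ℕ → Submodule ℤ (EuclideanSpace ℝ (Fin n))) : Prop :=
  Ls 0 = ⊥ ∧ Ls m = L ∧ (∀ j, j < m → Ls j < Ls (j + 1)) ∧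
    ∀ j, j ≤ m → (Ls j : Set (EuclideanSpace ℝ (Fin n)))
      = (L : Set (EuclideanSpace ℝ (Fin n)))
        ∩ (Submodule.span ℝ (Ls j : Set (EuclideanSpace ℝ (Fin n))) :
            Submodule ℝ (EuclideanSpace ℝ (Fin n)))

/-- A `(q, γ)`-filtration of `L`: a chain of primitive sublattices such that
`μ(L_j/L_{j−1}) ≤ q·λ₁(L_j/L_{j−1})/2` and `λ₁(L_{j+1}/L_j) ≥ γ·λ₁(L_j/L_{j−1})`. -/
def IsQGFiltration {n : ℕ} (L : Submodule ℤ (EuclideanSpace ℝ (Fin n))) (m : ℕ)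
    (Ls : ℕ → Submodule ℤ (EuclideanSpace ℝ (Fin n))) (q γ : ℝ) : Prop :=
  IsPrimitiveChain L m Ls ∧
  (∀ j, 1 ≤ j → j ≤ m → covRad (quotLat Ls j) ≤ q * lambda1 (quotLat Ls j) / 2) ∧
  (∀ j, 1 ≤ j → j < m → lambda1 (quotLat Ls (j + 1)) ≥ γ * lambda1 (quotLat Ls j))

/-- The `j`-th "compressed projection" embedding `E_{j,α}(x) = Σ_{i=j}^m α^{i−j}·π_i(x)`,
where `π_i` is the orthogonal projection onto `span(L_i) ∩ span(L_{i−1})ᗮ`. -/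
def filtEmbed {n : ℕ} (Ls : ℕ → Submodule ℤ (EuclideanSpace ℝ (Fin n))) (m : ℕ) (α : ℝ)
    (j : ℕ) (x : EuclideanSpace ℝ (Fin n)) : EuclideanSpace ℝ (Fin n) :=
  ∑ i ∈ Finset.Icc j m, α ^ (i - j) •
    ((orthogonalProjection
        ((Submodule.span ℝ (Ls i : Set (EuclideanSpace ℝ (Fin n)))) ⊓
          (Submodule.span ℝ (Ls (i - 1) : Set (EuclideanSpace ℝ (Fin n))))ᗮ) x :
      EuclideanSpace ℝ (Fin n)))

/-!
Let `v` be a shortest nonzero vector of the lattice `Λ` and pick a maximal list of lattice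
vectors whose Gram–Schmidt vectors are all shorter than `γ‖v‖`; let `V` be their span.
Babai's nearest-plane rounding puts every point of `V` within `√n·γ‖v‖/2` of `Λ ∩ V`, and
`λ₁(Λ ∩ V) = ‖v‖` because `v ∈ V`, so `Λ ∩ V` can be the first step of the filtration. By
maximality every nonzero vector of the projection `Λ'` of `Λ` onto `Vᗮ` has length at least
`γ‖v‖`. The lattice `Λ'` is again discrete and of smaller rank; by induction it has a
filtration, and the preimages in `Λ` of its members, preceded by `{0}`, form a filtration
of `Λ` whose quotients are `Λ ∩ V` followed by the quotients of the filtration of `Λ'`.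
-/

section Projection

variable {E : Type*} [NormedAddCommGroup E] [InnerProductSpace ℝ E] [FiniteDimensional ℝ E]

lemma sub_starProjection_orthogonal_mem (V : Submodule ℝ E) (x : E) :
    x - Vᗮ.starProjection x ∈ V := by
  rw [starProjection_orthogonal_val, sub_sub_cancel]
  exact V.starProjection_apply_mem x

lemma starProjection_orthogonal_eq_zero_iff {V : Submodule ℝ E} {x : E} :
    Vᗮ.starProjection x = 0 ↔ x ∈ V := by
  rw [starProjection_apply_eq_zero_iff, orthogonal_orthogonal]

lemma span_eq_sup_span_image_starProjection {V : Submodule ℝ E} {S : Set E}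
    (hV : V ≤ span ℝ S) : span ℝ S = V ⊔ span ℝ (Vᗮ.starProjection '' S) := by
  apply le_antisymm
  · refine span_le.2 fun x hx => ?_
    rw [← sub_add_cancel x (Vᗮ.starProjection x)]
    exact add_mem (mem_sup_left (sub_starProjection_orthogonal_mem V x))
      (mem_sup_right (subset_span ⟨x, hx, rfl⟩))
  · refine sup_le hV (span_le.2 ?_)
    rintro _ ⟨x, hx, rfl⟩
    rw [← sub_sub_cancel x (Vᗮ.starProjection x)]
    exact sub_mem (subset_span hx) (hV (sub_starProjection_orthogonal_mem V x))

lemma starProjection_orthogonal_sup {V U : Submodule ℝ E} (hU : U ≤ Vᗮ) (x : E) :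
    (V ⊔ U)ᗮ.starProjection x = Uᗮ.starProjection (Vᗮ.starProjection x) := by
  set y := Vᗮ.starProjection x
  have hy : y ∈ Vᗮ := starProjection_apply_mem _ x
  have hxy : (V ⊔ U)ᗮ.starProjection x = (V ⊔ U)ᗮ.starProjection y := by
    rw [← sub_eq_zero, ← map_sub, starProjection_orthogonal_eq_zero_iff]
    exact mem_sup_left (sub_starProjection_orthogonal_mem V x)
  rw [hxy]
  refine eq_starProjection_of_mem_orthogonal' ?_ ?_ (add_sub_cancel _ y).symm
  · rw [← inf_orthogonal]
    refine ⟨?_, starProjection_apply_mem _ y⟩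
    rw [starProjection_orthogonal_val]
    exact sub_mem hy (hU (starProjection_apply_mem U y))
  · rw [orthogonal_orthogonal]
    exact mem_sup_right (sub_starProjection_orthogonal_mem U y)

lemma finrank_span_image_starProjection_lt {V : Submodule ℝ E} {S : Set E}
    (hV : V ≤ span ℝ S) (hV0 : V ≠ ⊥) :
    Module.finrank ℝ (span ℝ (Vᗮ.starProjection '' S)) < Module.finrank ℝ (span ℝ S) := by
  have hdisj : V ⊓ span ℝ (Vᗮ.starProjection '' S) = ⊥ := by
    refine eq_bot_iff.2 (le_trans (inf_le_inf_left V (span_le.2 ?_)) (inf_orthogonal_eq_bot V).le)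
    rintro _ ⟨x, -, rfl⟩
    exact starProjection_apply_mem _ x
  have hsum := finrank_sup_add_finrank_inf_eq V (span ℝ (Vᗮ.starProjection '' S))
  rw [← span_eq_sup_span_image_starProjection hV, hdisj, finrank_bot] at hsum
  have := one_le_finrank_iff.2 hV0
  omega

end Projection

section ShortVectors

variable {E : Type*} [NormedAddCommGroup E]

lemma lambda1_le_norm {A : Set E} {w : E} (hw : w ∈ A) (hw0 : w ≠ 0) : lambda1 A ≤ ‖w‖ :=
  csInf_le ⟨0, by rintro _ ⟨v, -, rfl⟩; exact norm_nonneg v⟩ ⟨w, ⟨hw, hw0⟩, rfl⟩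

lemma le_lambda1 {A : Set E} {c : ℝ} (hne : ∃ w ∈ A, w ≠ 0)
    (h : ∀ w ∈ A, w ≠ 0 → c ≤ ‖w‖) : c ≤ lambda1 A := by
  obtain ⟨w, hw, hw0⟩ := hne
  refine le_csInf ⟨_, w, ⟨hw, hw0⟩, rfl⟩ ?_
  rintro _ ⟨v, ⟨hv, hv0⟩, rfl⟩
  exact h v hv hv0

def FiniteInBalls (A : Set E) : Prop := ∀ R : ℝ, (A ∩ closedBall 0 R).Finite

lemma FiniteInBalls.exists_shortest {A : Set E} (hA : FiniteInBalls A) {a : E} (ha : a ∈ A)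
    (ha0 : a ≠ 0) : ∃ v ∈ A, v ≠ 0 ∧ ∀ w ∈ A, w ≠ 0 → ‖v‖ ≤ ‖w‖ := by
  obtain ⟨v, ⟨⟨hvA, hvR⟩, hv0⟩, hmin⟩ := Set.exists_min_image _ norm (hA ‖a‖).sdiff
    (⟨a, ⟨ha, by simp⟩, ha0⟩ : ((A ∩ closedBall 0 ‖a‖) \ {0}).Nonempty)
  refine ⟨v, hvA, hv0, fun w hw hw0 => ?_⟩
  by_cases hwR : ‖w‖ ≤ ‖a‖
  · exact hmin w ⟨⟨hw, by simpa using hwR⟩, hw0⟩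
  · exact (mem_closedBall_zero_iff.1 hvR).trans (le_of_not_ge hwR)

lemma covRad_le_of_forall_exists_norm_sub_le [NormedSpace ℝ E] {A : Set E} {B : ℝ}
    (hB : 0 ≤ B) (h : ∀ x ∈ span ℝ A, ∃ z ∈ A, ‖x - z‖ ≤ B) : covRad A ≤ B := by
  refine Real.sSup_le ?_ hB
  rintro _ ⟨x, hx, rfl⟩
  obtain ⟨z, hz, hxz⟩ := h x hx
  exact (infDist_le_dist_of_mem hz).trans (dist_eq_norm x z ▸ hxz)

lemma finiteInBalls_of_discreteTopology [NormedSpace ℝ E] [FiniteDimensional ℝ E]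
    (Λ : Submodule ℤ E) [DiscreteTopology Λ] : FiniteInBalls (Λ : Set E) := fun R => by
  rw [Set.inter_comm]
  exact finite_isBounded_inter_isClosed DiscreteTopology.isDiscrete isBounded_closedBall
    (AddSubgroup.isClosed_of_discrete (H := Λ.toAddSubgroup))

end ShortVectors

lemma List.setOf_mem_cons {α : Type*} (b : α) (l : List α) :
    {y | y ∈ b :: l} = insert b {y | y ∈ l} := by
  ext; simp

section GramSchmidt

variable {E : Type*} [NormedAddCommGroup E] [InnerProductSpace ℝ E] [FiniteDimensional ℝ E]

def gsNormSqSum : List E → ℝ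
  | [] => 0
  | b :: l => ‖(span ℝ {y | y ∈ l})ᗮ.starProjection b‖ ^ 2 + gsNormSqSum l

theorem exists_norm_sub_sq_le_gsNormSqSum (l : List E) :
    ∀ x ∈ span ℝ {y | y ∈ l}, ∃ z ∈ span ℤ {y | y ∈ l},
      ‖x - z‖ ^ 2 ≤ gsNormSqSum l / 4 := by
  induction l with
  | nil =>
    intro x hx
    refine ⟨0, zero_mem _, ?_⟩
    simp_all [gsNormSqSum]
  | cons b l ih =>
    intro x hx
    set W := span ℝ {y | y ∈ l}
    rw [List.setOf_mem_cons, mem_span_insert] at hx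
    obtain ⟨s, w, hw, rfl⟩ := hx
    set p := Wᗮ.starProjection b
    set c := round s
    -- rounding the coefficient of `b` leaves the error `(s - c) • p ⟂ W`; the rest lies in `W`
    have hrest : (s - c) • (b - p) + w ∈ W :=
      add_mem (smul_mem _ _ (sub_starProjection_orthogonal_mem W b)) hw
    obtain ⟨z, hz, hzb⟩ := ih _ hrest
    have hzW : z ∈ W := span_le_restrictScalars ℤ ℝ _ hz
    refine ⟨c • b + z, ?_, ?_⟩
    · rw [List.setOf_mem_cons]
      exact mem_span_insert.2 ⟨c, z, hz, rfl⟩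
    have hsplit : s • b + w - (c • b + z) = (s - c) • p + ((s - c) • (b - p) + w - z) := by
      rw [← Int.cast_smul_eq_zsmul ℝ]
      module
    have horth : inner ℝ ((s - c) • p) ((s - c) • (b - p) + w - z) = 0 :=
      inner_left_of_mem_orthogonal (sub_mem hrest hzW)
        (smul_mem _ _ (starProjection_apply_mem _ b))
    have hround : ‖(s - c) • p‖ ^ 2 ≤ ‖p‖ ^ 2 / 4 := by
      rw [norm_smul, mul_pow, Real.norm_eq_abs, sq_abs]
      have hsc : |s - c| ≤ 1 / 2 := abs_sub_round s
      have : (s - c) ^ 2 ≤ 1 / 4 := by nlinarith [abs_nonneg (s - c), sq_abs (s - c)]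
      nlinarith [sq_nonneg ‖p‖]
    rw [hsplit, norm_add_sq_real, horth, gsNormSqSum]
    linarith

def IsShortGSList (Λ : Set E) (c : ℝ) : List E → Prop
  | [] => True
  | b :: l => b ∈ Λ ∧ b ∉ span ℝ {y | y ∈ l} ∧
      ‖(span ℝ {y | y ∈ l})ᗮ.starProjection b‖ < c ∧ IsShortGSList Λ c l

namespace IsShortGSList

variable {Λ : Set E} {c : ℝ} {l : List E}

lemma subset (h : IsShortGSList Λ c l) : {y | y ∈ l} ⊆ Λ := by
  induction l with
  | nil => simp
  | cons b l ih =>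
    rw [List.setOf_mem_cons]
    exact Set.insert_subset h.1 (ih h.2.2.2)

lemma length_le_finrank_span (h : IsShortGSList Λ c l) :
    l.length ≤ Module.finrank ℝ (span ℝ {y | y ∈ l}) := by
  induction l with
  | nil => simp
  | cons b l ih =>
    have hlt : span ℝ {y | y ∈ l} < span ℝ {y | y ∈ b :: l} := by
      rw [List.setOf_mem_cons, span_insert]
      exact SetLike.lt_iff_le_and_exists.2 ⟨le_sup_right,
        b, mem_sup_left (mem_span_singleton_self b), h.2.1⟩
    have := finrank_lt_finrank_of_lt hlt
    have := ih h.2.2.2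
    simp only [List.length_cons]
    omega

lemma length_le_finrank (h : IsShortGSList Λ c l) : l.length ≤ Module.finrank ℝ E :=
  h.length_le_finrank_span.trans (finrank_le _)

lemma gsNormSqSum_le (h : IsShortGSList Λ c l) : gsNormSqSum l ≤ l.length * c ^ 2 := by
  induction l with
  | nil => simp [gsNormSqSum]
  | cons b l ih =>
    have hb := h.2.2.1
    have := ih h.2.2.2
    simp only [gsNormSqSum, List.length_cons]
    push_cast
    nlinarith [norm_nonneg ((span ℝ {y | y ∈ l})ᗮ.starProjection b)]

lemma exists_norm_sub_le (h : IsShortGSList Λ c l) (hc : 0 ≤ c) :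
    ∀ x ∈ span ℝ {y | y ∈ l}, ∃ z ∈ span ℤ {y | y ∈ l},
      ‖x - z‖ ≤ √(Module.finrank ℝ E) * c / 2 := by
  intro x hx
  obtain ⟨z, hz, hxz⟩ := exists_norm_sub_sq_le_gsNormSqSum l x hx
  refine ⟨z, hz, (pow_le_pow_iff_left₀ (norm_nonneg _) (by positivity) two_ne_zero).1 ?_⟩
  have hlen : (l.length : ℝ) ≤ Module.finrank ℝ E := by exact_mod_cast h.length_le_finrank
  calc ‖x - z‖ ^ 2 ≤ l.length * c ^ 2 / 4 := hxz.trans (by linarith [h.gsNormSqSum_le])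
    _ ≤ Module.finrank ℝ E * c ^ 2 / 4 := by gcongr
    _ = (√(Module.finrank ℝ E) * c / 2) ^ 2 := by
      rw [div_pow, mul_pow, Real.sq_sqrt (Nat.cast_nonneg _)]
      ring

end IsShortGSList

lemma exists_maximal_isShortGSList (Λ : Set E) (c : ℝ) :
    ∃ l, IsShortGSList Λ c l ∧ ∀ z ∈ Λ,
      ‖(span ℝ {y | y ∈ l})ᗮ.starProjection z‖ < c → z ∈ span ℝ {y | y ∈ l} := by
  set lengths := {k | ∃ l, IsShortGSList Λ c l ∧ l.length = k}
  have hbdd : BddAbove lengths :=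
    ⟨Module.finrank ℝ E, by rintro _ ⟨l, hl, rfl⟩; exact hl.length_le_finrank⟩
  obtain ⟨l, hl, hlen⟩ := Nat.sSup_mem (⟨0, [], trivial, rfl⟩ : lengths.Nonempty) hbdd
  refine ⟨l, hl, fun z hz hzc => by_contra fun hzl => ?_⟩
  have := le_csSup hbdd ⟨z :: l, ⟨hz, hzl, hzc, hl⟩, rfl⟩
  simp only [List.length_cons] at this
  omega

end GramSchmidt

section ProjectedLattice

variable {E : Type*} [NormedAddCommGroup E] [InnerProductSpace ℝ E] [FiniteDimensional ℝ E]

def projLattice (Λ : Submodule ℤ E) (V : Submodule ℝ E) : Submodule ℤ E :=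
  Λ.map ((Vᗮ.starProjection : E →ₗ[ℝ] E).restrictScalars ℤ)

lemma coe_projLattice (Λ : Submodule ℤ E) (V : Submodule ℝ E) :
    (projLattice Λ V : Set E) = Vᗮ.starProjection '' Λ :=
  map_coe _ _

lemma coe_projLattice_subset_orthogonal (Λ : Submodule ℤ E) (V : Submodule ℝ E) :
    (projLattice Λ V : Set E) ⊆ Vᗮ := by
  rw [coe_projLattice]
  rintro _ ⟨z, -, rfl⟩
  exact starProjection_apply_mem _ z

lemma norm_le_of_mem_projLattice {Λ : Submodule ℤ E} {V : Submodule ℝ E} {c : ℝ}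
    (hmax : ∀ z ∈ Λ, ‖Vᗮ.starProjection z‖ < c → z ∈ V) {w : E}
    (hw : w ∈ projLattice Λ V) (hw0 : w ≠ 0) : c ≤ ‖w‖ := by
  rw [← SetLike.mem_coe, coe_projLattice] at hw
  obtain ⟨z, hz, rfl⟩ := hw
  exact le_of_not_gt fun hzc => hw0 (starProjection_orthogonal_eq_zero_iff.2 (hmax z hz hzc))

lemma FiniteInBalls.projLattice {Λ : Submodule ℤ E} {V : Submodule ℝ E} {B : ℝ}
    (hΛ : FiniteInBalls (Λ : Set E))
    (hcov : ∀ x ∈ V, ∃ z ∈ Λ ⊓ V.restrictScalars ℤ, ‖x - z‖ ≤ B) :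
    FiniteInBalls (projLattice Λ V : Set E) := by
  intro R
  refine ((hΛ (R + B)).image Vᗮ.starProjection).subset ?_
  rw [coe_projLattice]
  rintro _ ⟨⟨z, hz, rfl⟩, hzR⟩
  obtain ⟨u, ⟨huΛ, huV⟩, hu⟩ := hcov _ (sub_starProjection_orthogonal_mem V z)
  refine ⟨z - u, ⟨sub_mem hz huΛ, ?_⟩, ?_⟩
  · rw [mem_closedBall_zero_iff] at hzR ⊢
    calc ‖z - u‖ = ‖(z - Vᗮ.starProjection z - u) + Vᗮ.starProjection z‖ := by
          congr 1; abel
      _ ≤ B + R := (norm_add_le _ _).trans (add_le_add hu hzR)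
      _ = R + B := add_comm _ _
  · rw [map_sub, starProjection_orthogonal_eq_zero_iff.2 huV, sub_zero]

lemma finrank_span_projLattice_lt {Λ : Submodule ℤ E} {V : Submodule ℝ E}
    (hV : V ≤ span ℝ (Λ : Set E)) (hV0 : V ≠ ⊥) :
    Module.finrank ℝ (span ℝ (projLattice Λ V : Set E)) <
      Module.finrank ℝ (span ℝ (Λ : Set E)) := by
  rw [coe_projLattice]
  exact finrank_span_image_starProjection_lt hV hV0

lemma exists_wellCovered_maximal_subspace (Λ : Submodule ℤ E) {c : ℝ} (hc : 0 ≤ c) :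
    ∃ V : Submodule ℝ E, V ≤ span ℝ (↑(Λ ⊓ V.restrictScalars ℤ) : Set E) ∧
      (∀ x ∈ V, ∃ z ∈ Λ ⊓ V.restrictScalars ℤ,
        ‖x - z‖ ≤ √(Module.finrank ℝ E) * c / 2) ∧
      ∀ z ∈ Λ, ‖Vᗮ.starProjection z‖ < c → z ∈ V := by
  obtain ⟨l, hl, hmax⟩ := exists_maximal_isShortGSList (Λ : Set E) c
  have hlM : span ℤ {y | y ∈ l} ≤ Λ ⊓ (span ℝ {y | y ∈ l}).restrictScalars ℤ :=
    le_inf (span_le.2 hl.subset) (span_le_restrictScalars ℤ ℝ _)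
  refine ⟨span ℝ {y | y ∈ l}, span_le.2 fun y hy => ?_, fun x hx => ?_, hmax⟩
  · exact subset_span (hlM (subset_span hy))
  · obtain ⟨z, hz, hxz⟩ := hl.exists_norm_sub_le hc x hx
    exact ⟨z, hlM hz, hxz⟩

end ProjectedLattice

section Lift

variable {E : Type*} [NormedAddCommGroup E] [InnerProductSpace ℝ E] [FiniteDimensional ℝ E]

def liftChain (Λ : Submodule ℤ E) (V : Submodule ℝ E) (Ls : ℕ → Submodule ℤ E) :
    ℕ → Submodule ℤ E
  | 0 => ⊥
  | i + 1 => Λ ⊓ (Ls i).comap ((Vᗮ.starProjection : E →ₗ[ℝ] E).restrictScalars ℤ)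

variable {Λ : Submodule ℤ E} {V : Submodule ℝ E} {Ls : ℕ → Submodule ℤ E}

lemma liftChain_one (h0 : Ls 0 = ⊥) : liftChain Λ V Ls 1 = Λ ⊓ V.restrictScalars ℤ := by
  ext z
  simp [liftChain, h0]

lemma inf_le_liftChain_succ (i : ℕ) :
    Λ ⊓ V.restrictScalars ℤ ≤ liftChain Λ V Ls (i + 1) := by
  rintro z ⟨hz, hzV⟩
  exact ⟨hz, by simp [starProjection_orthogonal_eq_zero_iff.2 hzV]⟩

lemma image_liftChain_succ {i : ℕ} (h : Ls i ≤ projLattice Λ V) :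
    Vᗮ.starProjection '' (liftChain Λ V Ls (i + 1) : Set E) = Ls i := by
  refine subset_antisymm ?_ fun w hw => ?_
  · rintro _ ⟨z, ⟨-, hz⟩, rfl⟩
    exact hz
  · obtain ⟨z, hz, rfl⟩ : w ∈ Vᗮ.starProjection '' (Λ : Set E) :=
      coe_projLattice Λ V ▸ h hw
    exact ⟨z, ⟨hz, hw⟩, rfl⟩

lemma span_liftChain_succ (hVM : V ≤ span ℝ (↑(Λ ⊓ V.restrictScalars ℤ) : Set E))
    {i : ℕ} (h : Ls i ≤ projLattice Λ V) :
    span ℝ (liftChain Λ V Ls (i + 1) : Set E) = V ⊔ span ℝ (Ls i : Set E) := by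
  rw [span_eq_sup_span_image_starProjection
    (hVM.trans (span_mono (inf_le_liftChain_succ i))), image_liftChain_succ h]

end Lift

section Filtration

variable {n : ℕ}

local notation "𝔼" n:max => EuclideanSpace ℝ (Fin n)

lemma coe_bot_eq_inter_span (Λ : Submodule ℤ (𝔼 n)) :
    ((⊥ : Submodule ℤ (𝔼 n)) : Set (𝔼 n)) =
      (Λ : Set (𝔼 n)) ∩ span ℝ ((⊥ : Submodule ℤ (𝔼 n)) : Set (𝔼 n)) := by
  ext; simp

lemma projPerp_eq_image (S A : Set (𝔼 n)) :
    projPerp S A = (span ℝ S)ᗮ.starProjection '' A :=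
  rfl

lemma projPerp_bot (A : Set (𝔼 n)) :
    projPerp ((⊥ : Submodule ℤ (𝔼 n)) : Set (𝔼 n)) A = A := by
  simp [projPerp_eq_image, starProjection_top]

lemma quotLat_one {Ls : ℕ → Submodule ℤ (𝔼 n)} (h0 : Ls 0 = ⊥) :
    quotLat Ls 1 = Ls 1 := by
  rw [quotLat, Nat.sub_self, h0, projPerp_bot]

lemma IsPrimitiveChain.le {L : Submodule ℤ (𝔼 n)} {m : ℕ}
    {Ls : ℕ → Submodule ℤ (𝔼 n)} (h : IsPrimitiveChain L m Ls) {j : ℕ}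
    (hj : j ≤ m) : Ls j ≤ L := fun z hz =>
  ((Set.ext_iff.1 (h.2.2.2 j hj) z).1 hz).1

lemma isQGFiltration_bot (q γ : ℝ) :
    IsQGFiltration ⊥ 0 (fun _ => (⊥ : Submodule ℤ (𝔼 n))) q γ :=
  ⟨⟨rfl, rfl, by omega, fun _ _ => coe_bot_eq_inter_span ⊥⟩, by omega, by omega⟩

variable {Λ : Submodule ℤ (𝔼 n)} {V : Submodule ℝ (𝔼 n)}
  {m : ℕ} {Ls : ℕ → Submodule ℤ (𝔼 n)}

theorem IsPrimitiveChain.lift (hM : Λ ⊓ V.restrictScalars ℤ ≠ ⊥)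
    (h : IsPrimitiveChain (projLattice Λ V) m Ls) :
    IsPrimitiveChain Λ (m + 1) (liftChain Λ V Ls) := by
  have hle : ∀ i ≤ m, Ls i ≤ projLattice Λ V := fun i hi => h.le hi
  obtain ⟨h0, hm, hlt, hprim⟩ := h
  refine ⟨rfl, inf_eq_left.2 (hm ▸ le_comap_map _ _), ?_, ?_⟩
  · rintro (_ | i) hi
    · rw [liftChain_one h0]
      exact bot_lt_iff_ne_bot.2 hM
    refine lt_of_le_of_ne (inf_le_inf_left _ (comap_mono (hlt i (by omega)).le)) fun heq => ?_
    have himage :=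
      congrArg (fun N : Submodule ℤ (𝔼 n) => Vᗮ.starProjection '' (N : Set (𝔼 n))) heq
    simp only [image_liftChain_succ (hle i (by omega)),
      image_liftChain_succ (hle (i + 1) (by omega))] at himage
    exact (hlt i (by omega)).ne (SetLike.coe_injective himage)
  · rintro (_ | i) hi
    · exact coe_bot_eq_inter_span Λ
    refine subset_antisymm (fun z hz => ⟨hz.1, subset_span hz⟩) ?_
    rintro z ⟨hzΛ, hz⟩
    have hspan : Vᗮ.starProjection z ∈ span ℝ (Ls i : Set (𝔼 n)) := by
      have := image_span_subset_span Vᗮ.starProjection.toLinearMap _ ⟨z, hz, rfl⟩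
      rwa [ContinuousLinearMap.coe_coe, image_liftChain_succ (hle i (by omega))] at this
    refine ⟨hzΛ, ?_⟩
    show Vᗮ.starProjection z ∈ (Ls i : Set (𝔼 n))
    rw [hprim i (by omega)]
    exact ⟨coe_projLattice Λ V ▸ ⟨z, hzΛ, rfl⟩, hspan⟩

lemma quotLat_liftChain_succ_succ (hVM : V ≤ span ℝ (↑(Λ ⊓ V.restrictScalars ℤ) : Set (𝔼 n)))
    {i : ℕ} (hi : Ls i ≤ projLattice Λ V) (hi' : Ls (i + 1) ≤ projLattice Λ V) :
    quotLat (liftChain Λ V Ls) (i + 2) = quotLat Ls (i + 1) := by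
  have hU : span ℝ (Ls i : Set (𝔼 n)) ≤ Vᗮ :=
    span_le.2 fun w hw => coe_projLattice_subset_orthogonal Λ V (hi hw)
  show projPerp (liftChain Λ V Ls (i + 1) : Set (𝔼 n)) _ = projPerp (Ls i : Set (𝔼 n)) _
  rw [projPerp_eq_image, projPerp_eq_image, span_liftChain_succ hVM hi,
    ← image_liftChain_succ hi', Set.image_image]
  exact Set.image_congr fun z _ => starProjection_orthogonal_sup hU z

theorem IsQGFiltration.lift {q γ : ℝ}
    (hVM : V ≤ span ℝ (↑(Λ ⊓ V.restrictScalars ℤ) : Set (𝔼 n)))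
    (hM : Λ ⊓ V.restrictScalars ℤ ≠ ⊥)
    (hcov : covRad (↑(Λ ⊓ V.restrictScalars ℤ) : Set (𝔼 n)) ≤
      q * lambda1 (↑(Λ ⊓ V.restrictScalars ℤ) : Set (𝔼 n)) / 2)
    (hgap : ∀ w ∈ projLattice Λ V, w ≠ 0 →
      γ * lambda1 (↑(Λ ⊓ V.restrictScalars ℤ) : Set (𝔼 n)) ≤ ‖w‖)
    (h : IsQGFiltration (projLattice Λ V) m Ls q γ) :
    IsQGFiltration Λ (m + 1) (liftChain Λ V Ls) q γ := by
  obtain ⟨hchain, hcov', hgap'⟩ := h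
  have hle : ∀ i ≤ m, Ls i ≤ projLattice Λ V := fun i hi => hchain.le hi
  have hquot : ∀ i < m, quotLat (liftChain Λ V Ls) (i + 2) = quotLat Ls (i + 1) := fun i hi =>
    quotLat_liftChain_succ_succ hVM (hle i (by omega)) (hle (i + 1) (by omega))
  have hquot1 : quotLat (liftChain Λ V Ls) 1 = Λ ⊓ V.restrictScalars ℤ := by
    rw [quotLat_one rfl, liftChain_one hchain.1]
  refine ⟨hchain.lift hM, ?_, ?_⟩
  · rintro (_ | _ | i) hj hjm
    · omega
    · rwa [hquot1]
    · rw [hquot i (by omega)]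
      exact hcov' (i + 1) (by omega) (by omega)
  · rintro (_ | _ | i) hj hjm
    · omega
    · obtain ⟨w, hw, hw0⟩ := exists_mem_ne_zero_of_ne_bot
        (bot_lt_iff_ne_bot.1 (hchain.1 ▸ hchain.2.2.1 0 (by omega)))
      rw [hquot 0 (by omega), quotLat_one hchain.1, hquot1]
      exact le_lambda1 ⟨w, hw, hw0⟩ fun w hw hw0 => hgap w (hle 1 (by omega) hw) hw0
    · rw [hquot (i + 1) (by omega), hquot i (by omega)]
      exact hgap' (i + 1) (by omega) (by omega)

theorem exists_isQGFiltration_of_finiteInBalls {γ : ℝ} (hγ : 1 < γ)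
    (Λ : Submodule ℤ (𝔼 n)) (hΛ : FiniteInBalls (Λ : Set (𝔼 n))) :
    ∃ m Ls, IsQGFiltration Λ m Ls (γ * √n) γ := by
  induction hd : Module.finrank ℝ (span ℝ (Λ : Set (𝔼 n)))
    using Nat.strong_induction_on generalizing Λ with
  | _ d ih =>
  rcases eq_or_ne Λ ⊥ with rfl | hΛ0
  · exact ⟨0, _, isQGFiltration_bot _ _⟩
  obtain ⟨a, ha, ha0⟩ := exists_mem_ne_zero_of_ne_bot hΛ0
  obtain ⟨v, hv, hv0, hmin⟩ := hΛ.exists_shortest ha ha0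
  obtain ⟨V, hVM, hcov, hmax⟩ :=
    exists_wellCovered_maximal_subspace Λ (c := γ * ‖v‖) (by positivity)
  set M := Λ ⊓ V.restrictScalars ℤ
  have hvM : v ∈ M := ⟨hv, hmax v hv ((norm_starProjection_apply_le _ v).trans_lt
    (lt_mul_left (norm_pos_iff.2 hv0) hγ))⟩
  have hlam : lambda1 (M : Set (𝔼 n)) = ‖v‖ :=
    le_antisymm (lambda1_le_norm hvM hv0)
      (le_lambda1 ⟨v, hvM, hv0⟩ fun w hw hw0 => hmin w hw.1 hw0)
  have hspanM : span ℝ (M : Set (𝔼 n)) = V :=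
    le_antisymm (span_le.2 fun _ hz => hz.2) hVM
  rw [finrank_euclideanSpace_fin] at hcov
  have hrank := finrank_span_projLattice_lt (hVM.trans (span_mono inf_le_left))
    ((Submodule.ne_bot_iff V).2 ⟨v, hvM.2, hv0⟩)
  obtain ⟨m, Ls, hLs⟩ := ih _ (hd ▸ hrank) (projLattice Λ V) (hΛ.projLattice hcov) rfl
  refine ⟨m + 1, _, hLs.lift hVM ((Submodule.ne_bot_iff M).2 ⟨v, hvM, hv0⟩) ?_ ?_⟩
  · rw [hlam]
    refine covRad_le_of_forall_exists_norm_sub_le (by positivity) fun x hx => ?_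
    obtain ⟨z, hz, hxz⟩ := hcov x (hspanM ▸ hx)
    exact ⟨z, hz, hxz.trans_eq (by ring)⟩
  · rw [hlam]
    exact fun w hw hw0 => norm_le_of_mem_projLattice hmax hw hw0

end Filtration

theorem exists_qg_filtration_general
    (n : ℕ)
    (L : Submodule ℤ (EuclideanSpace ℝ (Fin n))) [DiscreteTopology L]
    (γ : ℝ) (hγ : 1 < γ) :
    ∃ (m : ℕ) (Ls : ℕ → Submodule ℤ (EuclideanSpace ℝ (Fin n))),
      IsQGFiltration L m Ls (γ * Real.sqrt n) γ :=
  exists_isQGFiltration_of_finiteInBalls hγ L (finiteInBalls_of_discreteTopology L)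

/-- For every `n ≥ 1`, every full-rank lattice `L ⊆ ℝⁿ`, and every `γ > 1`, there exists a
`(γ√n, γ)`-filtration of `L`. -/
theorem exists_qg_filtration
    (n : ℕ) (hn : 1 ≤ n)
    (L : Submodule ℤ (EuclideanSpace ℝ (Fin n))) [DiscreteTopology L] (hL : IsZLattice ℝ L)
    (γ : ℝ) (hγ : 1 < γ) :
    ∃ (m : ℕ) (Ls : ℕ → Submodule ℤ (EuclideanSpace ℝ (Fin n))),
      IsQGFiltration L m Ls (γ * Real.sqrt n) γ :=
  exists_qg_filtration_general n L γ hγ
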